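/- arXiv:1902.04271 — 6 statements merged into one kernel-verified Lean document; each statement's English description precedes it below -/
import Mathlib

section
/- Consider the action of SL₂(k) × SL₂(k) on k² ⊕ M₂(k) given by (g₁,g₂)·(v, A) = (g₁v, g₁ A g₂ᵀ). For every element (v, A) of k² ⊕ M₂(k), there exist (g₁,g₂) ∈ SL₂(k) × SL₂(k) such that, writing (w, B) = (g₁v, g₁ A g₂ᵀ), the first entry of w is 0 and the (1,1)-entry of B is 0. -/
open Matrix

/-! Rows of `g₁ A g₂ᵀ` are the rows of `g₁ A` moved by `g₂`, so both conditions ask for a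
single `SL₂(k)` element killing the first coordinate of a given vector: first for `v` (this
fixes `g₁`), then for the first row of `g₁ A` (this fixes `g₂`). Such an element exists for
every vector `(a, b)`: the identity if `a = 0`, and `[[-b/a, 1], [-1, 0]]` otherwise. -/

theorem Matrix.mul_transpose_apply_eq_mulVec {m n o α : Type*} [Fintype n] [CommSemiring α]
    (M : Matrix m n α) (N : Matrix o n α) (i : m) (j : o) :
    (M * Nᵀ) i j = (N *ᵥ M i) j := by
  simp only [mul_apply, transpose_apply, mulVec, dotProduct, mul_comm]

theorem Matrix.SpecialLinearGroup.exists_mulVec_apply_zero_eq_zero {k : Type*} [Field k]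
    (w : Fin 2 → k) :
    ∃ g : SpecialLinearGroup (Fin 2) k, ((g : Matrix (Fin 2) (Fin 2) k) *ᵥ w) 0 = 0 := by
  by_cases hw : w 0 = 0
  · exact ⟨1, by simpa using hw⟩
  · refine ⟨⟨!![-w 1 / w 0, 1; -1, 0], by simp [det_fin_two_of]⟩, ?_⟩
    simp [mulVec, dotProduct, Fin.sum_univ_two, div_mul_cancel₀ _ hw]

/-- For the action of `SL₂(k) × SL₂(k)` on `k² ⊕ M₂(k)` given by
`(g₁,g₂)·(v, A) = (g₁v, g₁ A g₂ᵀ)`, every element can be moved so that the first entry of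
the vector and the `(1,1)`-entry of the matrix vanish. -/
theorem sl2_sl2_eliminate (k : Type*) [Field k] (v : Fin 2 → k)
    (A : Matrix (Fin 2) (Fin 2) k) :
    ∃ (g₁ g₂ : Matrix.SpecialLinearGroup (Fin 2) k),
      ((g₁ : Matrix (Fin 2) (Fin 2) k) *ᵥ v) 0 = 0 ∧
      ((g₁ : Matrix (Fin 2) (Fin 2) k) * A * (g₂ : Matrix (Fin 2) (Fin 2) k)ᵀ) 0 0 = 0 := by
  obtain ⟨g₁, hv⟩ := SpecialLinearGroup.exists_mulVec_apply_zero_eq_zero v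
  obtain ⟨g₂, hA⟩ :=
    SpecialLinearGroup.exists_mulVec_apply_zero_eq_zero (((g₁ : Matrix (Fin 2) (Fin 2) k) * A) 0)
  exact ⟨g₁, g₂, hv, by rwa [mul_transpose_apply_eq_mulVec]⟩
end

section
/- Consider the action of SL₃(k) × SL₂(k) on k² ⊕ M_{3,2}(k) given by (g₁,g₂)·(v, A) = (g₂v, g₁ A g₂ᵀ). For every element (v, A), there exists (g₁,g₂) ∈ SL₃(k) × SL₂(k) such that, writing (w, B) = (g₂v, g₁ A g₂ᵀ), the first entry of w is 0 and the entire first row of B is 0. -/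
open Matrix

/-- Any nonzero vector in k³ is the first row of some SL₃ matrix. -/
lemma extendSL3 {k : Type*} [Field k] (w : Fin 3 → k) (hw : w ≠ 0) :
    ∃ g : Matrix.SpecialLinearGroup (Fin 3) k, ∀ i, (g : Matrix (Fin 3) (Fin 3) k) 0 i = w i := by
  rw [Function.ne_iff] at hw
  obtain ⟨i, hi⟩ := hw
  simp only [Pi.zero_apply] at hi
  fin_cases i
  · exact ⟨⟨Matrix.of ![w, ![0, (w 0)⁻¹, 0], ![0, 0, 1]], by
      simp [Matrix.det_fin_three, Matrix.vecHead, Matrix.vecTail]; exact mul_inv_cancel₀ (by simpa using hi)⟩, fun i => rfl⟩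
  · exact ⟨⟨Matrix.of ![w, ![-(w 1)⁻¹, 0, 0], ![0, 0, 1]], by
      simp [Matrix.det_fin_three, Matrix.vecHead, Matrix.vecTail]; exact mul_inv_cancel₀ (by simpa using hi)⟩, fun i => rfl⟩
  · exact ⟨⟨Matrix.of ![w, ![(w 2)⁻¹, 0, 0], ![0, 1, 0]], by
      simp [Matrix.det_fin_three, Matrix.vecHead, Matrix.vecTail]; exact mul_inv_cancel₀ (by simpa using hi)⟩, fun i => rfl⟩

/-- A 3×2 matrix has a nonzero left-kernel vector. -/
lemma leftKernel32 {k : Type*} [Field k] (B : Matrix (Fin 3) (Fin 2) k) :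
    ∃ w : Fin 3 → k, w ≠ 0 ∧ ∀ j, (∑ i, w i * B i j) = 0 := by
  have hni : ¬ Function.Injective (Matrix.mulVecLin Bᵀ) := by
    intro h
    have := LinearMap.finrank_le_finrank_of_injective h
    simp [Module.finrank_pi] at this
  rw [Function.not_injective_iff] at hni
  obtain ⟨x, y, hxy, hne⟩ := hni
  refine ⟨x - y, sub_ne_zero_of_ne hne, fun j => ?_⟩
  have : Bᵀ *ᵥ (x - y) = 0 := by
    rw [Matrix.mulVec_sub, sub_eq_zero]
    exact hxy
  have h2 := congrFun this j
  simpa [Matrix.mulVec, dotProduct, Matrix.transpose_apply, mul_comm] using h2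

lemma killRow {k : Type*} [Field k] (B : Matrix (Fin 3) (Fin 2) k) :
    ∃ g₁ : Matrix.SpecialLinearGroup (Fin 3) k,
      ∀ j, ((g₁ : Matrix (Fin 3) (Fin 3) k) * B) 0 j = 0 := by
  obtain ⟨w, hw, hker⟩ := leftKernel32 B
  obtain ⟨g, hg⟩ := extendSL3 w hw
  refine ⟨g, fun j => ?_⟩
  rw [Matrix.mul_apply]
  simpa [hg] using hker j

/-- For the action of `SL₃(k) × SL₂(k)` on `k² ⊕ M_{3,2}(k)` given by
`(g₁,g₂)·(v, A) = (g₂v, g₁ A g₂ᵀ)`, every element can be moved so that the first entry of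
the vector and the entire first row of the matrix vanish. -/
theorem sl3_sl2_eliminate_2m32 (k : Type*) [Field k] (v : Fin 2 → k)
    (A : Matrix (Fin 3) (Fin 2) k) :
    ∃ (g₁ : Matrix.SpecialLinearGroup (Fin 3) k) (g₂ : Matrix.SpecialLinearGroup (Fin 2) k),
      ((g₂ : Matrix (Fin 2) (Fin 2) k) *ᵥ v) 0 = 0 ∧
      ∀ j : Fin 2,
        ((g₁ : Matrix (Fin 3) (Fin 3) k) * A * (g₂ : Matrix (Fin 2) (Fin 2) k)ᵀ) 0 j = 0 := by
  -- first pick g₂ killing v 0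
  have hg2 : ∃ g₂ : Matrix.SpecialLinearGroup (Fin 2) k,
      ((g₂ : Matrix (Fin 2) (Fin 2) k) *ᵥ v) 0 = 0 := by
    by_cases h0 : v 0 = 0
    · exact ⟨1, by simp [h0]⟩
    · refine ⟨⟨Matrix.of ![![v 1, -(v 0)], ![(v 0)⁻¹, 0]], by
        simp [Matrix.det_fin_two, mul_inv_cancel₀ h0]⟩, ?_⟩
      simp [Matrix.mulVec, dotProduct, Fin.sum_univ_two, mul_comm]
  obtain ⟨g₂, hv⟩ := hg2
  obtain ⟨g₁, hB⟩ := killRow (A * (g₂ : Matrix (Fin 2) (Fin 2) k)ᵀ)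
  refine ⟨g₁, g₂, hv, fun j => ?_⟩
  rw [Matrix.mul_assoc]
  exact hB j
end

section
/- Consider the action of SL₃(k) × SL₂(k) on k³ ⊕ M_{3,2}(k) given by (g₁,g₂)·(v, A) = (g₁v, g₁ A g₂ᵀ). For every element (v, A), there exists (g₁,g₂) ∈ SL₃(k)×SL₂(k) such that, writing (w, B) = (g₁v, g₁ A g₂ᵀ), the first two entries of w are 0 and the (1,1)-entry of B is 0. -/
open Matrix

/-!
Both conditions are instances of one fact: `SL_n(K)` moves any vector onto a coordinate axis.
For `SL₃` this is applied to `v`; for `SL₂` it is applied to the first row `r` of `g₁ A`, because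
the first row of `g₁ A g₂ᵀ` is `g₂ r`. The group elements used are rank-one perturbations
`1 + u wᵀ` with `w ⬝ᵥ u = 0`, which have determinant `1` by the matrix determinant lemma.
-/

namespace Matrix

variable {n R K : Type*} [Fintype n] [DecidableEq n]

theorem det_one_add_vecMulVec [CommRing R] (u w : n → R) :
    det (1 + vecMulVec u w) = 1 + w ⬝ᵥ u := by
  rw [vecMulVec_eq Unit, det_one_add_replicateCol_mul_replicateRow]

theorem one_add_vecMulVec_mulVec [CommRing R] (u w v : n → R) :
    (1 + vecMulVec u w) *ᵥ v = v + (w ⬝ᵥ v) • u := by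
  rw [add_mulVec, one_mulVec, vecMulVec_mulVec, op_smul_eq_smul]

namespace SpecialLinearGroup

def oneAddVecMulVec [CommRing R] (u w : n → R) (h : w ⬝ᵥ u = 0) : SpecialLinearGroup n R :=
  ⟨1 + vecMulVec u w, by rw [det_one_add_vecMulVec, h, add_zero]⟩

theorem oneAddVecMulVec_mulVec [CommRing R] (u w : n → R) (h : w ⬝ᵥ u = 0) (v : n → R) :
    (oneAddVecMulVec u w h : Matrix n n R) *ᵥ v = v + (w ⬝ᵥ v) • u :=
  one_add_vecMulVec_mulVec u w v

variable [Field K]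

theorem exists_mulVec_apply_ne_zero {v : n → K} (hv : v ≠ 0) (p : n) :
    ∃ g : SpecialLinearGroup n K, ((g : Matrix n n K) *ᵥ v) p ≠ 0 := by
  by_cases hp : v p = 0
  · obtain ⟨j, hj⟩ := Function.ne_iff.mp hv
    have hjp : j ≠ p := by rintro rfl; exact hj hp
    refine ⟨oneAddVecMulVec (Pi.single p 1) (Pi.single j 1) ?_, ?_⟩
    · simp [hjp]
    · simpa [oneAddVecMulVec_mulVec, hp] using hj
  · exact ⟨1, by simpa using hp⟩

theorem exists_mulVec_eq_single_of_apply_ne_zero {v : n → K} {p : n} (hp : v p ≠ 0) :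
    ∃ g : SpecialLinearGroup n K, (g : Matrix n n K) *ᵥ v = Pi.single p (v p) := by
  refine ⟨oneAddVecMulVec (Pi.single p (v p) - v) (Pi.single p (v p)⁻¹) ?_, ?_⟩
  · simp [dotProduct_sub]
  · simp [oneAddVecMulVec_mulVec, hp]

theorem exists_mulVec_eq_single (p : n) (v : n → K) :
    ∃ g : SpecialLinearGroup n K, ∃ c : K, (g : Matrix n n K) *ᵥ v = Pi.single p c := by
  rcases eq_or_ne v 0 with rfl | hv
  · exact ⟨1, 0, by simp⟩
  obtain ⟨g, hg⟩ := exists_mulVec_apply_ne_zero hv p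
  obtain ⟨h, hh⟩ := exists_mulVec_eq_single_of_apply_ne_zero hg
  exact ⟨h * g, _, by rw [coe_mul, ← mulVec_mulVec, hh]⟩

end SpecialLinearGroup

end Matrix

/-- For the action of `SL₃(k) × SL₂(k)` on `k³ ⊕ M_{3,2}(k)` given by
`(g₁,g₂)·(v, A) = (g₁v, g₁ A g₂ᵀ)`, every element can be moved so that the first two
entries of the vector and the `(1,1)`-entry of the matrix vanish. -/
theorem sl3_sl2_eliminate_3_32 (k : Type*) [Field k] (v : Fin 3 → k)
    (A : Matrix (Fin 3) (Fin 2) k) :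
    ∃ (g₁ : Matrix.SpecialLinearGroup (Fin 3) k) (g₂ : Matrix.SpecialLinearGroup (Fin 2) k),
      ((g₁ : Matrix (Fin 3) (Fin 3) k) *ᵥ v) 0 = 0 ∧
      ((g₁ : Matrix (Fin 3) (Fin 3) k) *ᵥ v) 1 = 0 ∧
      ((g₁ : Matrix (Fin 3) (Fin 3) k) * A * (g₂ : Matrix (Fin 2) (Fin 2) k)ᵀ) 0 0 = 0 := by
  obtain ⟨g₁, c, hv⟩ := SpecialLinearGroup.exists_mulVec_eq_single 2 v
  obtain ⟨g₂, d, hr⟩ :=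
    SpecialLinearGroup.exists_mulVec_eq_single 1 (((g₁ : Matrix (Fin 3) (Fin 3) k) * A) 0)
  refine ⟨g₁, g₂, by simp [hv], by simp [hv], ?_⟩
  rw [mul_apply_eq_vecMul, vecMul_transpose, hr]
  simp
end

section
/- Let A be an n×n matrix over a field k that is alternating, i.e., Aᵀ = −A and all diagonal entries of A are 0 (the diagonal condition being imposed separately to cover characteristic 2). Then the rank of A is even. -/
/-!
If `B x y ≠ 0` for an alternating form `B`, then `B` is nondegenerate on the plane spanned by
`x` and `y`, which therefore splits off orthogonally; by induction, a nondegenerate alternating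
form lives on an even-dimensional space. The rank of `A` is the dimension of `kⁿ` modulo the
radical of the alternating form `v, w ↦ vᵀ A w`, and this form is nondegenerate on any
complement of the radical.
-/

open Matrix Module Submodule

open LinearMap (BilinForm)

namespace LinearMap.BilinForm

lemma IsAlt.restrict {R M : Type*} [CommSemiring R] [AddCommMonoid M] [Module R M]
    {B : BilinForm R M} (hB : B.IsAlt) (W : Submodule R M) : (B.restrict W).IsAlt :=
  fun w => hB w

section CommRing

variable {R M : Type*} [CommRing R] [AddCommGroup M] [Module R M] {B : BilinForm R M}

lemma IsRefl.nondegenerate_restrict_of_isCompl_ker (hB : B.IsRefl) {W : Submodule R M}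
    (hW : IsCompl W (LinearMap.ker B)) : (B.restrict W).Nondegenerate := by
  have hBW : (B.restrict W).IsRefl := fun x y => hB x y
  refine (LinearMap.IsRefl.nondegenerate_iff_separatingLeft hBW).2 ?_
  rw [separatingLeft_iff_ker_eq_bot, ker_restrict_eq_of_codisjoint hW.codisjoint
    fun x _ y hy => hB y x (by rw [mem_ker.1 hy]; rfl)]
  exact (Submodule.disjoint_iff_comap_eq_bot).1 hW.disjoint

end CommRing

variable {K V : Type*} [Field K] [AddCommGroup V] [Module K V] {B : BilinForm K V}

lemma IsAlt.eq_zero_of_apply_eq_zero (hB : B.IsAlt) {x y : V} (hxy : B x y ≠ 0) {s t : K}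
    (hx : B (s • x + t • y) x = 0) (hy : B (s • x + t • y) y = 0) : s = 0 ∧ t = 0 := by
  simp only [map_add, map_smul, LinearMap.add_apply, LinearMap.smul_apply, smul_eq_mul,
    hB.self_eq_zero, mul_zero, zero_add, add_zero, ← hB.neg_eq x y] at hx hy
  exact ⟨(mul_eq_zero.1 hy).resolve_right hxy, by simpa [hxy] using hx⟩

lemma IsAlt.linearIndependent_pair (hB : B.IsAlt) {x y : V} (hxy : B x y ≠ 0) :
    LinearIndependent K ![x, y] :=
  LinearIndependent.pair_iff.2 fun _ _ h =>
    hB.eq_zero_of_apply_eq_zero hxy (by simp [h]) (by simp [h])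

lemma IsAlt.finrank_span_pair (hB : B.IsAlt) {x y : V} (hxy : B x y ≠ 0) :
    finrank K (span K {x, y}) = 2 := by
  have h := finrank_span_eq_card (hB.linearIndependent_pair hxy)
  rwa [Matrix.range_cons_cons_empty, Fintype.card_fin] at h

lemma IsAlt.nondegenerate_restrict_span_pair (hB : B.IsAlt) {x y : V} (hxy : B x y ≠ 0) :
    (B.restrict (span K {x, y})).Nondegenerate := by
  refine (LinearMap.IsRefl.nondegenerate_iff_separatingLeft (hB.restrict _).isRefl).2 ?_
  rintro ⟨w, hw⟩ hw0
  obtain ⟨s, t, rfl⟩ := mem_span_pair.1 hw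
  obtain ⟨rfl, rfl⟩ := hB.eq_zero_of_apply_eq_zero hxy (hw0 ⟨x, subset_span (by simp)⟩)
    (hw0 ⟨y, subset_span (by simp)⟩)
  simp

variable [FiniteDimensional K V]

lemma IsRefl.nondegenerate_restrict_orthogonal (hB : B.IsRefl) (hnd : B.Nondegenerate)
    {W : Submodule K V} (hW : (B.restrict W).Nondegenerate) :
    (B.restrict (B.orthogonal W)).Nondegenerate := by
  rw [restrict_nondegenerate_iff_isCompl_orthogonal hB, orthogonal_orthogonal hnd hB]
  exact (isCompl_orthogonal_of_restrict_nondegenerate hB hW).symm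

theorem IsAlt.even_finrank_of_nondegenerate (hB : B.IsAlt) (hnd : B.Nondegenerate) :
    Even (finrank K V) := by
  induction hN : finrank K V using Nat.strong_induction_on generalizing V with
  | _ N ih =>
  obtain rfl | hpos := N.eq_zero_or_pos
  · exact ⟨0, rfl⟩
  have : Nontrivial V := finrank_pos_iff.1 (hN ▸ hpos)
  obtain ⟨x, hx⟩ := exists_ne (0 : V)
  obtain ⟨y, hxy⟩ : ∃ y, B x y ≠ 0 := not_forall.1 fun h => hx (hnd.1 x h)
  have hcompl := isCompl_orthogonal_of_restrict_nondegenerate hB.isRefl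
    (hB.nondegenerate_restrict_span_pair hxy)
  have hdim : 2 + finrank K (B.orthogonal (span K {x, y})) = N := by
    rw [← hB.finrank_span_pair hxy, finrank_add_eq_of_isCompl hcompl, hN]
  obtain ⟨m, hm⟩ := ih _ (by omega) (hB.restrict _)
    (hB.isRefl.nondegenerate_restrict_orthogonal hnd (hB.nondegenerate_restrict_span_pair hxy)) rfl
  exact ⟨m + 1, by omega⟩

theorem IsAlt.even_finrank_quotient_ker (hB : B.IsAlt) :
    Even (finrank K (V ⧸ LinearMap.ker B)) := by
  obtain ⟨W, hW⟩ := (LinearMap.ker B).exists_isCompl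
  rw [(quotientEquivOfIsCompl _ _ hW).finrank_eq]
  exact (hB.restrict W).even_finrank_of_nondegenerate
    (hB.isRefl.nondegenerate_restrict_of_isCompl_ker hW.symm)

end LinearMap.BilinForm

namespace Matrix

variable {n : Type*} [Fintype n] [DecidableEq n]

lemma isAlt_toBilin' {R : Type*} [CommRing R] {A : Matrix n n R} (hA : Aᵀ = -A)
    (hdiag : ∀ i, A i i = 0) : A.toBilin'.IsAlt := by
  intro v
  -- Pairing `(i, j)` with `(j, i)` cancels the off-diagonal terms; in characteristic 2 the
  -- diagonal terms are killed only by `hdiag`.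
  have hskew : ∀ i j, A j i = -A i j := fun i j => by simpa using congrFun₂ hA i j
  rw [toBilin'_apply, ← Finset.sum_product']
  refine Finset.sum_ninvolution Prod.swap (fun ⟨i, j⟩ => ?_) (fun ⟨i, j⟩ h hij => ?_)
    (fun _ => Finset.mem_univ _) Prod.swap_swap
  · simp only [Prod.swap, hskew i j]
    ring
  · obtain rfl : i = j := (Prod.ext_iff.1 hij).2
    simp [hdiag] at h

lemma ker_toBilin' {R : Type*} [CommRing R] (A : Matrix n n R) :
    LinearMap.ker A.toBilin' = LinearMap.ker A.vecMulLinear := by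
  ext v
  simp only [LinearMap.mem_ker, LinearMap.ext_iff, toBilin'_apply', dotProduct_mulVec,
    LinearMap.zero_apply, dotProduct_eq_zero_iff, vecMulLinear_apply]

lemma rank_eq_finrank_quotient_ker_toBilin' {K : Type*} [Field K] (A : Matrix n n K) :
    A.rank = finrank K ((n → K) ⧸ LinearMap.ker A.toBilin') := by
  rw [← rank_transpose, rank, mulVecLin_transpose, ker_toBilin',
    (LinearMap.quotKerEquivRange _).finrank_eq]

end Matrix

/-- An alternating `n×n` matrix over a field (i.e. `Aᵀ = -A` with all diagonal entries `0`,
the latter imposed separately to cover characteristic 2) has even rank. -/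
theorem rank_alternating_even (k : Type*) [Field k] (n : ℕ)
    (A : Matrix (Fin n) (Fin n) k) (hA : Aᵀ = -A) (hdiag : ∀ i, A i i = 0) :
    Even A.rank := by
  rw [A.rank_eq_finrank_quotient_ker_toBilin']
  exact (isAlt_toBilin' hA hdiag).even_finrank_quotient_ker
end

section
/- Let E = k³ with standard basis e₁,e₂,e₃ and H = M₂(k), a 4-dimensional k-vector space. Define Φ : E ⊗ H → ⋀³H by Φ(Σᵢ eᵢ ⊗ hᵢ) = h₁ ∧ h₂ ∧ h₃, and identify ⋀³H with H* ≅ M₂(k) via the dual basis of the elementary matrices. Then for the GL₃(k) × GL₂(k) × GL₂(k) action on E ⊗ H given by (g₁,g₂,g₃)·(e ⊗ A) = (g₁e) ⊗ (g₂ A g₃ᵀ), one has Φ(g·x) = (det g₁)(det g₂)(det g₃) · θ(g₂) Φ(x) θ(g₃)ᵀ, where θ(g) = (det g)(gᵀ)⁻¹. -/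
/-!
Under the trace pairing `⟨X, Y⟩ = Σ X_pq Y_pq`, the matrix `Φ(h)` is characterised by
`⟨X, Φ(h)⟩ = det[X; h₁; h₂; h₃]`, the determinant of the coordinate rows. The `GL₃` factor mixes
the last three rows, which multiplies the determinant by `det g₁`. The map `X ↦ A X Bᵀ` acts on
every row through the Kronecker matrix `B ⊗ A`, of determinant `(det A det B)²`, and its adjoint
for the pairing is `Y ↦ Aᵀ Y B`; hence `Aᵀ Φ(A h Bᵀ) B = (det A det B)² Φ(h)`. Since
`θ(A) = adj(Aᵀ)`, multiplying by `θ(A)` on the left and `θ(B)ᵀ` on the right and cancelling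
`det A det B` gives the claim.
-/

open Matrix

/-- The map `θ : M₂(k) → M₂(k)` sending `!![a, b; c, d]` to `!![d, -c; -b, a]`;
it satisfies `θ(g) = (det g)(gᵀ)⁻¹` for invertible `g`. -/
def theta {k : Type*} [Field k] (A : Matrix (Fin 2) (Fin 2) k) : Matrix (Fin 2) (Fin 2) k :=
  !![A 1 1, -(A 1 0); -(A 0 1), A 0 0]

/-- Coordinates of a 2×2 matrix with respect to the basis `(E₁₁, E₁₂, E₂₁, E₂₂)` of
elementary matrices. -/
def flat {k : Type*} [Field k] (A : Matrix (Fin 2) (Fin 2) k) : Fin 4 → k :=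
  ![A 0 0, A 0 1, A 1 0, A 1 1]

/-- The Castling map `Φ : k³ ⊗ M₂(k) → M₂(k)`. An element `x = Σᵢ eᵢ ⊗ hᵢ` of `k³ ⊗ M₂(k)`
is encoded by the tuple `h : Fin 3 → M₂(k)`; `Φ(x) = h₁ ∧ h₂ ∧ h₃ ∈ ⋀³M₂(k) ≅ M₂(k)* ≅ M₂(k)`,
where the `(p,q)` matrix entry of `Φ(x)` is the coefficient of `E_{pq} ∧ h₁ ∧ h₂ ∧ h₃` on the
top wedge `E₁₁ ∧ E₁₂ ∧ E₂₁ ∧ E₂₂`, computed as a 4×4 determinant. -/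
def castlingPhi {k : Type*} [Field k] (h : Fin 3 → Matrix (Fin 2) (Fin 2) k) :
    Matrix (Fin 2) (Fin 2) k :=
  Matrix.of fun p q =>
    (Matrix.of ![flat (Matrix.single p q (1 : k)),
                 flat (h 0), flat (h 1), flat (h 2)]).det

section RowOperations

variable {R : Type*} [CommRing R]

theorem det_of_mulVec {ι : Type*} [Fintype ι] [DecidableEq ι] (L : Matrix ι ι R)
    (M : ι → ι → R) :
    det (of fun i => L *ᵥ M i) = det L * det (of M) := by
  have hrows : (of fun i => L *ᵥ M i) = of M * Lᵀ := by
    ext i j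
    simp [mulVec, dotProduct, mul_apply, mul_comm]
  rw [hrows, det_mul, det_transpose, mul_comm]

theorem det_of_vecCons_mul {n : ℕ} (v : Fin (n + 1) → R) (g : Matrix (Fin n) (Fin n) R)
    (W : Matrix (Fin n) (Fin (n + 1)) R) :
    det (of (vecCons v (g * W))) = det g * det (of (vecCons v W)) := by
  rw [det_succ_row_zero, det_succ_row_zero, Finset.mul_sum]
  refine Finset.sum_congr rfl fun j _ => ?_
  change (-1) ^ (j : ℕ) * v j * det ((g * W).submatrix id j.succAbove)
    = det g * ((-1) ^ (j : ℕ) * v j * det (W.submatrix id j.succAbove))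
  rw [submatrix_mul _ _ _ _ _ Function.bijective_id, submatrix_id_id, det_mul]
  ring

theorem det_of_vecCons_eq_sum {n : ℕ} (v : Fin (n + 1) → R) (W : Fin n → Fin (n + 1) → R) :
    det (of (vecCons v W)) = ∑ j, v j * det (of (vecCons (Pi.single j 1) W)) := by
  rw [det_succ_row_zero]
  refine Finset.sum_congr rfl fun j _ => ?_
  rw [det_succ_row_zero, Finset.sum_eq_single j]
  · change (-1 : R) ^ (j : ℕ) * v j * det ((of W).submatrix id j.succAbove)
      = v j * ((-1) ^ (j : ℕ) * (Pi.single j 1 : Fin (n + 1) → R) j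
        * det ((of W).submatrix id j.succAbove))
    rw [Pi.single_eq_same]
    ring
  · intro i _ hij
    change (-1 : R) ^ (i : ℕ) * (Pi.single j 1 : Fin (n + 1) → R) i * _ = 0
    rw [Pi.single_eq_of_ne hij]
    ring
  · simp

end RowOperations

open scoped Kronecker

section CastlingMap

variable {k : Type*} [Field k]

/-- The coefficient of `Y₀ ∧ Y₁ ∧ Y₂ ∧ Y₃` on `E₁₁ ∧ E₁₂ ∧ E₂₁ ∧ E₂₂`. -/
def topWedge (Y : Fin 4 → Matrix (Fin 2) (Fin 2) k) : k :=
  det (of fun i => flat (Y i))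

theorem castlingPhi_apply (h : Fin 3 → Matrix (Fin 2) (Fin 2) k) (p q : Fin 2) :
    castlingPhi h p q = topWedge (vecCons (single p q 1) h) := by
  simp only [castlingPhi, topWedge, of_apply]
  congr 1
  ext i r
  fin_cases i <;> rfl

theorem of_flat_vecCons (X : Matrix (Fin 2) (Fin 2) k) {n : ℕ}
    (h : Fin n → Matrix (Fin 2) (Fin 2) k) :
    (of fun i => flat (vecCons X h i)) = of (vecCons (flat X) fun i => flat (h i)) := by
  ext i r
  exact Fin.cases rfl (fun i => rfl) i

/-- `flat` reads a matrix row by row, whereas `Matrix.vec` reads it column by column. -/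
def flatIndexEquiv : Fin 4 ≃ Fin 2 × Fin 2 :=
  ((Equiv.prodComm _ _).trans (finProdFinEquiv : Fin 2 × Fin 2 ≃ Fin 4)).symm

theorem flat_eq_vec_comp (A : Matrix (Fin 2) (Fin 2) k) : flat A = vec A ∘ flatIndexEquiv := by
  have hvec : flat A ∘ flatIndexEquiv.symm = vec A := by
    funext ⟨c, r⟩
    fin_cases c <;> fin_cases r <;> simp [flat, flatIndexEquiv, finProdFinEquiv]
  rw [← hvec, Function.comp_assoc, Equiv.symm_comp_self, Function.comp_id]

theorem flat_single (p q : Fin 2) :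
    flat (single p q (1 : k)) = Pi.single (flatIndexEquiv.symm (q, p)) 1 := by
  rw [flat_eq_vec_comp, vec_single, Pi.single_comp_equiv]

theorem flat_single_dotProduct (p q : Fin 2) (Y : Matrix (Fin 2) (Fin 2) k) :
    flat (single p q 1) ⬝ᵥ flat Y = Y p q := by
  rw [flat_single, single_dotProduct, one_mul, flat_eq_vec_comp]
  simp

theorem flat_sum_smul {n : ℕ} (g : Matrix (Fin n) (Fin n) k)
    (h : Fin n → Matrix (Fin 2) (Fin 2) k) (j : Fin n) :
    flat (∑ i, g j i • h i) = (g * of fun i => flat (h i)) j := by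
  ext r
  simp [flat_eq_vec_comp, mul_apply, Matrix.sum_apply]

theorem flat_mul_mul_transpose (A B X : Matrix (Fin 2) (Fin 2) k) :
    flat (A * X * Bᵀ) = (B ⊗ₖ A).submatrix flatIndexEquiv flatIndexEquiv *ᵥ flat X := by
  rw [flat_eq_vec_comp, flat_eq_vec_comp, submatrix_mulVec_equiv, Function.comp_assoc,
    Equiv.self_comp_symm, Function.comp_id, kronecker_mulVec_vec]

theorem flat_mul_mul_transpose_dotProduct (A B X Y : Matrix (Fin 2) (Fin 2) k) :
    flat (A * X * Bᵀ) ⬝ᵥ flat Y = flat X ⬝ᵥ flat (Aᵀ * Y * B) := by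
  set K := (B ⊗ₖ A).submatrix flatIndexEquiv flatIndexEquiv
  calc flat (A * X * Bᵀ) ⬝ᵥ flat Y = (K *ᵥ flat X) ⬝ᵥ flat Y := by rw [flat_mul_mul_transpose]
    _ = flat X ⬝ᵥ (Kᵀ *ᵥ flat Y) := by
      rw [dotProduct_comm, dotProduct_mulVec, ← mulVec_transpose, dotProduct_comm]
    _ = flat X ⬝ᵥ flat (Aᵀ * Y * Bᵀᵀ) := by
      rw [flat_mul_mul_transpose, transpose_submatrix, ← kroneckerMap_transpose]
    _ = flat X ⬝ᵥ flat (Aᵀ * Y * B) := by rw [transpose_transpose]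

theorem topWedge_mul_mul_transpose (A B : Matrix (Fin 2) (Fin 2) k)
    (Y : Fin 4 → Matrix (Fin 2) (Fin 2) k) :
    topWedge (fun i => A * Y i * Bᵀ) = (A.det * B.det) ^ 2 * topWedge Y := by
  simp only [topWedge, flat_mul_mul_transpose, det_of_mulVec, det_submatrix_equiv_self,
    det_kronecker, Fintype.card_fin]
  ring

theorem topWedge_vecCons_sum_smul (X : Matrix (Fin 2) (Fin 2) k) (g : Matrix (Fin 3) (Fin 3) k)
    (h : Fin 3 → Matrix (Fin 2) (Fin 2) k) :
    topWedge (vecCons X fun j => ∑ i, g j i • h i) = g.det * topWedge (vecCons X h) := by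
  rw [topWedge, topWedge, of_flat_vecCons, of_flat_vecCons,
    show (fun j => flat (∑ i, g j i • h i)) = g * of fun i => flat (h i) from
      funext (flat_sum_smul g h), det_of_vecCons_mul]
  rfl

theorem topWedge_vecCons_eq_dotProduct (X : Matrix (Fin 2) (Fin 2) k)
    (h : Fin 3 → Matrix (Fin 2) (Fin 2) k) :
    topWedge (vecCons X h) = flat X ⬝ᵥ flat (castlingPhi h) := by
  rw [topWedge, of_flat_vecCons, det_of_vecCons_eq_sum, dotProduct]
  refine Finset.sum_congr rfl fun r _ => ?_
  rw [flat_eq_vec_comp (castlingPhi h), Function.comp_apply, vec, castlingPhi_apply, topWedge,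
    of_flat_vecCons, flat_single]
  simp

theorem castlingPhi_sum_smul (g : Matrix (Fin 3) (Fin 3) k)
    (h : Fin 3 → Matrix (Fin 2) (Fin 2) k) :
    castlingPhi (fun j => ∑ i, g j i • h i) = g.det • castlingPhi h := by
  ext p q
  rw [Matrix.smul_apply, castlingPhi_apply, castlingPhi_apply, topWedge_vecCons_sum_smul,
    smul_eq_mul]

theorem transpose_mul_castlingPhi_mul (A B : Matrix (Fin 2) (Fin 2) k)
    (h : Fin 3 → Matrix (Fin 2) (Fin 2) k) :
    Aᵀ * castlingPhi (fun i => A * h i * Bᵀ) * B = (A.det * B.det) ^ 2 • castlingPhi h := by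
  ext p q
  have hcons : (vecCons (A * single p q 1 * Bᵀ) fun i => A * h i * Bᵀ)
      = fun i => A * vecCons (single p q 1) h i * Bᵀ := by
    funext i
    exact Fin.cases rfl (fun i => rfl) i
  calc (Aᵀ * castlingPhi (fun i => A * h i * Bᵀ) * B) p q
      = flat (single p q 1) ⬝ᵥ flat (Aᵀ * castlingPhi (fun i => A * h i * Bᵀ) * B) :=
        (flat_single_dotProduct p q _).symm
    _ = flat (A * single p q 1 * Bᵀ) ⬝ᵥ flat (castlingPhi fun i => A * h i * Bᵀ) :=
        (flat_mul_mul_transpose_dotProduct A B _ _).symm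
    _ = topWedge (vecCons (A * single p q 1 * Bᵀ) fun i => A * h i * Bᵀ) :=
        (topWedge_vecCons_eq_dotProduct _ _).symm
    _ = ((A.det * B.det) ^ 2 • castlingPhi h) p q := by
      rw [hcons, topWedge_mul_mul_transpose, Matrix.smul_apply, smul_eq_mul, castlingPhi_apply]

theorem theta_eq_adjugate_transpose (A : Matrix (Fin 2) (Fin 2) k) : theta A = adjugate Aᵀ := by
  rw [adjugate_fin_two]
  ext i j
  fin_cases i <;> fin_cases j <;> rfl

theorem theta_mul_transpose (A : Matrix (Fin 2) (Fin 2) k) : theta A * Aᵀ = A.det • 1 := by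
  rw [theta_eq_adjugate_transpose, adjugate_mul, det_transpose]

theorem mul_transpose_theta (A : Matrix (Fin 2) (Fin 2) k) : A * (theta A)ᵀ = A.det • 1 := by
  rw [theta_eq_adjugate_transpose, ← adjugate_transpose, transpose_transpose, mul_adjugate]

theorem castlingPhi_mul_mul_transpose {A B : Matrix (Fin 2) (Fin 2) k} (hA : IsUnit A.det)
    (hB : IsUnit B.det) (h : Fin 3 → Matrix (Fin 2) (Fin 2) k) :
    castlingPhi (fun i => A * h i * Bᵀ)
      = (A.det * B.det) • (theta A * castlingPhi h * (theta B)ᵀ) := by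
  set Φ := castlingPhi (fun i => A * h i * Bᵀ)
  refine ((hA.mul hB).smul_left_cancel).mp ?_
  calc (A.det * B.det) • Φ = (theta A * Aᵀ) * Φ * (B * (theta B)ᵀ) := by
        rw [theta_mul_transpose, mul_transpose_theta, smul_mul, Matrix.one_mul, Matrix.mul_smul,
          Matrix.mul_one, smul_smul, mul_comm]
    _ = theta A * (Aᵀ * Φ * B) * (theta B)ᵀ := by simp only [Matrix.mul_assoc]
    _ = (A.det * B.det) • (A.det * B.det) • (theta A * castlingPhi h * (theta B)ᵀ) := by
      rw [transpose_mul_castlingPhi_mul, Matrix.mul_smul, Matrix.smul_mul, smul_smul, ← pow_two]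

end CastlingMap

theorem castlingPhi_equivariant_general (k : Type*) [Field k]
    (g₁ : Matrix (Fin 3) (Fin 3) k) (g₂ g₃ : Matrix (Fin 2) (Fin 2) k)
    (hg₂ : IsUnit g₂.det) (hg₃ : IsUnit g₃.det)
    (h : Fin 3 → Matrix (Fin 2) (Fin 2) k) :
    castlingPhi (fun j => ∑ i : Fin 3, g₁ j i • (g₂ * h i * g₃ᵀ))
      = (g₁.det * g₂.det * g₃.det) • (theta g₂ * castlingPhi h * (theta g₃)ᵀ) := by
  rw [castlingPhi_sum_smul, castlingPhi_mul_mul_transpose hg₂ hg₃, smul_smul, ← mul_assoc]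

/-- Equivariance of the Castling map: for the action of `GL₃(k) × GL₂(k) × GL₂(k)` on
`k³ ⊗ M₂(k)` by `(g₁,g₂,g₃)·(e ⊗ A) = (g₁e) ⊗ (g₂ A g₃ᵀ)` (so that the tuple `h`
becomes `j ↦ Σᵢ (g₁)ⱼᵢ • (g₂ hᵢ g₃ᵀ)`), one has
`Φ(g·x) = (det g₁)(det g₂)(det g₃) • θ(g₂) Φ(x) θ(g₃)ᵀ`. -/
theorem castlingPhi_equivariant (k : Type*) [Field k]
    (g₁ : Matrix (Fin 3) (Fin 3) k) (g₂ g₃ : Matrix (Fin 2) (Fin 2) k)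
    (hg₁ : IsUnit g₁.det) (hg₂ : IsUnit g₂.det) (hg₃ : IsUnit g₃.det)
    (h : Fin 3 → Matrix (Fin 2) (Fin 2) k) :
    castlingPhi (fun j => ∑ i : Fin 3, g₁ j i • (g₂ * h i * g₃ᵀ))
      = (g₁.det * g₂.det * g₃.det) • (theta g₂ * castlingPhi h * (theta g₃)ᵀ) :=
  castlingPhi_equivariant_general k g₁ g₂ g₃ hg₂ hg₃ h
end

section
/- Define P : M₂(k) ⊕ k² ⊕ k² → k by P(A, v₁, v₂) = det(A) · (v₁ᵀ θ(A) v₂)³, where θ(!![a,b;c,d]) = !![d,-c;-b,a]. For g₁, g₂ ∈ GL₂(k) and scalars s, u₁, u₂ ∈ k*, consider the action g·(A, v₁, v₂) = (s g₁ A g₂ᵀ, u₁ g₁ v₁, u₂ g₂ v₂). Then (u₁ g₁ v₁)ᵀ θ(s g₁ A g₂ᵀ)(u₂ g₂ v₂) = s u₁ u₂ (det g₁)(det g₂) · v₁ᵀ θ(A) v₂ and det(s g₁ A g₂ᵀ) = s² (det g₁)(det g₂) det A; hence P(g·x) = s⁵ u₁³ u₂³ (det g₁)⁴ (det g₂)⁴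 P(x). -/
open Matrix

/-- The relative invariant `P(A, v₁, v₂) = det(A) · (v₁ᵀ θ(A) v₂)³`. -/
def relInvP {k : Type*} [Field k] (A : Matrix (Fin 2) (Fin 2) k) (v₁ v₂ : Fin 2 → k) : k :=
  A.det * (v₁ ⬝ᵥ (theta A *ᵥ v₂)) ^ 3

lemma theta00 {k : Type*} [Field k] (A : Matrix (Fin 2) (Fin 2) k) : theta A 0 0 = A 1 1 := rfl
lemma theta01 {k : Type*} [Field k] (A : Matrix (Fin 2) (Fin 2) k) : theta A 0 1 = -(A 1 0) := rfl
lemma theta10 {k : Type*} [Field k] (A : Matrix (Fin 2) (Fin 2) k) : theta A 1 0 = -(A 0 1) := rfl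
lemma theta11 {k : Type*} [Field k] (A : Matrix (Fin 2) (Fin 2) k) : theta A 1 1 = A 0 0 := rfl

set_option maxHeartbeats 2000000 in
/-- For the action of `(g₁, g₂, s, u₁, u₂) ∈ GL₂(k)² × (k*)³` on `M₂(k) ⊕ k² ⊕ k²` by
`(A, v₁, v₂) ↦ (s g₁ A g₂ᵀ, u₁ g₁ v₁, u₂ g₂ v₂)`:
the pairing transforms as `(u₁g₁v₁)ᵀ θ(s g₁ A g₂ᵀ)(u₂g₂v₂) = s u₁ u₂ (det g₁)(det g₂) · v₁ᵀ θ(A) v₂`,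
the determinant as `det(s g₁ A g₂ᵀ) = s² (det g₁)(det g₂) det A`, and hence
`P(g·x) = s⁵ u₁³ u₂³ (det g₁)⁴ (det g₂)⁴ P(x)`. -/
theorem relInvP_transform (k : Type*) [Field k]
    (A : Matrix (Fin 2) (Fin 2) k) (v₁ v₂ : Fin 2 → k)
    (g₁ g₂ : Matrix (Fin 2) (Fin 2) k) (hg₁ : IsUnit g₁.det) (hg₂ : IsUnit g₂.det)
    (s u₁ u₂ : k) (hs : s ≠ 0) (hu₁ : u₁ ≠ 0) (hu₂ : u₂ ≠ 0) :
    ((u₁ • (g₁ *ᵥ v₁)) ⬝ᵥ (theta (s • (g₁ * A * g₂ᵀ)) *ᵥ (u₂ • (g₂ *ᵥ v₂)))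
        = s * u₁ * u₂ * g₁.det * g₂.det * (v₁ ⬝ᵥ (theta A *ᵥ v₂))) ∧
    ((s • (g₁ * A * g₂ᵀ)).det = s ^ 2 * g₁.det * g₂.det * A.det) ∧
    (relInvP (s • (g₁ * A * g₂ᵀ)) (u₁ • (g₁ *ᵥ v₁)) (u₂ • (g₂ *ᵥ v₂))
        = s ^ 5 * u₁ ^ 3 * u₂ ^ 3 * g₁.det ^ 4 * g₂.det ^ 4 * relInvP A v₁ v₂) := by
  have h1 : (u₁ • (g₁ *ᵥ v₁)) ⬝ᵥ (theta (s • (g₁ * A * g₂ᵀ)) *ᵥ (u₂ • (g₂ *ᵥ v₂)))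
      = s * u₁ * u₂ * g₁.det * g₂.det * (v₁ ⬝ᵥ (theta A *ᵥ v₂)) := by
    simp only [dotProduct, mulVec, Fin.sum_univ_two, Pi.smul_apply, smul_eq_mul,
      theta00, theta01, theta10, theta11, Matrix.smul_apply, Matrix.mul_apply,
      Matrix.transpose_apply, det_fin_two]
    ring
  have h2 : (s • (g₁ * A * g₂ᵀ)).det = s ^ 2 * g₁.det * g₂.det * A.det := by
    simp only [det_smul, det_mul, det_transpose, Fintype.card_fin]
    ring
  refine ⟨h1, h2, ?_⟩
  simp only [relInvP, h1, h2]
  ring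
end
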